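/- arXiv:1711.09719 — 4 statements merged into one kernel-verified Lean document; each statement's English description precedes it below -/
import Mathlib

section
/- For T>0, m∈(0,1), δ>0, t∈(0,T), τ∈(t,T), define t_i := t/2^i + (1−1/2^i)τ for i≥0. If h:[0,T]→[0,∞) satisfies δ(t'−s')h(t')^m ≤ h(s') for all 0<s'<t'<T, then for every i≥1, h(t) ≥ (δ(τ−t))^{Σ_i} / 2^{σ_i} · h(t_i)^{m^i}, where Σ_i = (1−m^i)/(1−m) and σ_i = (1−(i+1)m^i + i m^{i+1})/(1−m)². -/
open Real Set

theorem iteration_inequality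
    (T m δ t τ : ℝ) (hT : 0 < T) (hm : m ∈ Set.Ioo (0:ℝ) 1) (hδ : 0 < δ)
    (ht : t ∈ Set.Ioo (0:ℝ) T) (hτ : τ ∈ Set.Ioo t T)
    (h : ℝ → ℝ) (hnn : ∀ s ∈ Set.Icc (0:ℝ) T, 0 ≤ h s)
    (hfun : ∀ s' t' : ℝ, 0 < s' → s' < t' → t' < T → δ * (t' - s') * h t' ^ m ≤ h s') :
    ∀ i : ℕ, 1 ≤ i →
      (δ * (τ - t)) ^ ((1 - m ^ i) / (1 - m))
          / (2:ℝ) ^ ((1 - ((i:ℝ) + 1) * m ^ i + (i:ℝ) * m ^ (i + 1)) / (1 - m) ^ 2)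
          * h (t / 2 ^ i + (1 - 1 / 2 ^ i) * τ) ^ (m ^ i)
        ≤ h t := by
  obtain ⟨hm0, hm1⟩ := hm
  obtain ⟨ht0, htT⟩ := ht
  obtain ⟨hτt, hτT⟩ := hτ
  have hm1' : (1:ℝ) - m ≠ 0 := by linarith
  have hDpos : 0 < δ * (τ - t) := by nlinarith
  have h2pow : ∀ i : ℕ, (1:ℝ) ≤ 2 ^ i := fun i => one_le_pow₀ one_le_two
  have h2pos : ∀ i : ℕ, (0:ℝ) < (2:ℝ) ^ i := fun i => by positivity
  have hge : ∀ i : ℕ, t ≤ t / 2 ^ i + (1 - 1 / 2 ^ i) * τ := by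
    intro i
    have h1 := h2pow i; have h2 := h2pos i
    have hnn' : 0 ≤ (1 - 1/(2:ℝ)^i) * (τ - t) := by
      apply mul_nonneg
      · rw [sub_nonneg, div_le_one h2]; exact h1
      · linarith
    have expand : t / 2 ^ i + (1 - 1 / 2 ^ i) * τ - t = (1 - 1/(2:ℝ)^i) * (τ - t) := by
      field_simp; ring
    linarith
  have hlt : ∀ i : ℕ, t / 2 ^ i + (1 - 1 / 2 ^ i) * τ < τ := by
    intro i
    have h2 := h2pos i
    have expand : τ - (t / 2 ^ i + (1 - 1 / 2 ^ i) * τ) = (τ - t)/(2:ℝ)^i := by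
      field_simp; ring
    have : 0 < (τ - t)/(2:ℝ)^i := div_pos (by linarith) h2
    linarith
  have hmem : ∀ i : ℕ, t / 2 ^ i + (1 - 1 / 2 ^ i) * τ ∈ Set.Icc (0:ℝ) T := by
    intro i
    exact ⟨le_trans ht0.le (hge i), le_trans (hlt i).le hτT.le⟩
  have hdiff : ∀ i : ℕ, (t / 2 ^ (i+1) + (1 - 1 / 2 ^ (i+1)) * τ)
      - (t / 2 ^ i + (1 - 1 / 2 ^ i) * τ) = (τ - t)/(2:ℝ)^(i+1) := by
    intro i
    have h2 := (h2pos i).ne'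
    have h2' := (h2pos (i+1)).ne'
    field_simp
    ring
  intro i hi
  induction i, hi using Nat.le_induction with
  | base =>
    have hlt1 : t < t / 2 ^ 1 + (1 - 1 / 2 ^ 1) * τ := by
      norm_num; linarith
    have hT1 : t / 2 ^ 1 + (1 - 1 / 2 ^ 1) * τ < T := lt_trans (hlt 1) hτT
    have key := hfun t (t / 2 ^ 1 + (1 - 1 / 2 ^ 1) * τ) ht0 hlt1 hT1
    have e1 : (1 - m ^ 1) / (1 - m) = 1 := by rw [pow_one]; field_simp
    have e2 : (1 - (((1:ℕ):ℝ) + 1) * m ^ 1 + ((1:ℕ):ℝ) * m ^ (1 + 1)) / (1 - m) ^ 2 = 1 := by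
      push_cast; rw [div_eq_one_iff_eq (by positivity)]; ring
    rw [e1, e2, Real.rpow_one, Real.rpow_one, pow_one m]
    have eq : δ * (τ - t) / 2 = δ * ((t / 2 ^ 1 + (1 - 1 / 2 ^ 1) * τ) - t) := by
      norm_num; ring
    rw [eq]
    exact key
  | succ i hi ih =>
    set si := t / 2 ^ i + (1 - 1 / 2 ^ i) * τ with hsi
    set ti := t / 2 ^ (i+1) + (1 - 1 / 2 ^ (i+1)) * τ with hti
    have hsipos : 0 < si := lt_of_lt_of_le ht0 (hge i)
    have hsilt : si < ti := by
      have := hdiff i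
      have : 0 < ti - si := by rw [hdiff i]; exact div_pos (by linarith) (h2pos (i+1))
      linarith
    have htiT : ti < T := lt_trans (hlt (i+1)) hτT
    have key := hfun si ti hsipos hsilt htiT
    have hhti : 0 ≤ h ti := hnn ti (hmem (i+1))
    have hhsi : 0 ≤ h si := hnn si (hmem i)
    have coefeq : δ * (ti - si) = δ * (τ - t) / 2 ^ (i+1) := by
      rw [hdiff i]; ring
    rw [coefeq] at key
    have hc : 0 < δ * (τ - t) / 2 ^ (i+1) := div_pos hDpos (h2pos (i+1))
    have key3 : (δ * (τ - t) / 2 ^ (i+1) * h ti ^ m) ^ (m ^ i) ≤ h si ^ (m ^ i) :=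
      Real.rpow_le_rpow (mul_nonneg hc.le (Real.rpow_nonneg hhti m)) key (pow_pos hm0 i).le
    have expand : (δ * (τ - t) / 2 ^ (i+1) * h ti ^ m) ^ (m ^ i)
        = (δ * (τ - t)) ^ (m ^ i) / (2:ℝ) ^ (((i:ℝ) + 1) * m ^ i) * h ti ^ (m ^ (i+1)) := by
      rw [Real.mul_rpow hc.le (Real.rpow_nonneg hhti m),
        Real.div_rpow hDpos.le (h2pos (i+1)).le,
        ← Real.rpow_natCast (2:ℝ) (i+1), ← Real.rpow_mul (by norm_num : (0:ℝ) ≤ 2),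
        ← Real.rpow_mul hhti, ← pow_succ']
      push_cast
      ring_nf
    have e1 : (1 - m ^ (i+1)) / (1 - m) = (1 - m ^ i) / (1 - m) + m ^ i := by
      field_simp; ring
    have e2 : (1 - ((i:ℝ) + 1 + 1) * m ^ (i+1) + ((i:ℝ) + 1) * m ^ ((i+1) + 1)) / (1 - m) ^ 2
        = (1 - ((i:ℝ) + 1) * m ^ i + (i:ℝ) * m ^ (i + 1)) / (1 - m) ^ 2 + ((i:ℝ) + 1) * m ^ i := by
      push_cast; field_simp; ring
    push_cast
    have coef_eq : (δ * (τ - t)) ^ ((1 - m ^ (i+1)) / (1 - m))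
        / (2:ℝ) ^ ((1 - ((i:ℝ) + 1 + 1) * m ^ (i+1) + ((i:ℝ) + 1) * m ^ ((i+1) + 1)) / (1 - m) ^ 2)
        = ((δ * (τ - t)) ^ ((1 - m ^ i) / (1 - m))
            / (2:ℝ) ^ ((1 - ((i:ℝ) + 1) * m ^ i + (i:ℝ) * m ^ (i + 1)) / (1 - m) ^ 2))
          * ((δ * (τ - t)) ^ (m ^ i) / (2:ℝ) ^ (((i:ℝ) + 1) * m ^ i)) := by
      rw [e1, e2, Real.rpow_add hDpos, Real.rpow_add two_pos]
      ring
    calc (δ * (τ - t)) ^ ((1 - m ^ (i+1)) / (1 - m))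
          / (2:ℝ) ^ ((1 - ((i:ℝ) + 1 + 1) * m ^ (i+1) + ((i:ℝ) + 1) * m ^ ((i+1) + 1)) / (1 - m) ^ 2)
          * h ti ^ (m ^ (i+1))
        = ((δ * (τ - t)) ^ ((1 - m ^ i) / (1 - m))
            / (2:ℝ) ^ ((1 - ((i:ℝ) + 1) * m ^ i + (i:ℝ) * m ^ (i + 1)) / (1 - m) ^ 2))
          * ((δ * (τ - t) / 2 ^ (i+1) * h ti ^ m) ^ (m ^ i)) := by
          rw [coef_eq, expand]; ring
      _ ≤ ((δ * (τ - t)) ^ ((1 - m ^ i) / (1 - m))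
            / (2:ℝ) ^ ((1 - ((i:ℝ) + 1) * m ^ i + (i:ℝ) * m ^ (i + 1)) / (1 - m) ^ 2))
          * h si ^ (m ^ i) := by
          exact mul_le_mul_of_nonneg_left key3
            (div_nonneg (Real.rpow_nonneg hDpos.le _) (Real.rpow_nonneg (by norm_num) _))
      _ ≤ h t := ih
end

section
/- Fix p∈(1,2), T>0, a>0, b>0, and let θ = p/(p−1), γ = (p−1)q/(p(1−q)) with 0<q<p/2, and α, β as in the paper. Let W(t,x) := (T−t)^α (a + b|x|^θ (T−t)^{θβ})^{−γ} and suppose ξ∈C²([0,∞)) satisfies ξ(0)=ξ'(0)=ξ''(0)=0, ξ''>0 on (0,∞), and |ξ'(r)|^{p−2}ξ''(r)→0 as r→0. If t₀∈(0,T) and W(t₀,0) − W(t₀,x) ≤ ξ(|x|) for all x in some ball B_δ(0), then a contradiction follows; i.e., no such ξ exists. -/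
/-!
Near `x = 0` the drop `W(t₀,0) - W(t₀,x)` is bounded below by `c ‖x‖^θ` with `c > 0`: by the mean
value theorem for `y ↦ y^(-γ)` between `a` and `a + b ‖x‖^θ (T-t₀)^(θβ)`. On the other hand every
admissible `ξ` is `o(r^θ)`: the hypothesis on `|ξ'|^(p-2) ξ''` says that `(ξ')^(p-1)` has right
derivative `0` at `0`, so `ξ' = o(r^(1/(p-1)))`, and convexity gives `ξ(r) ≤ r ξ'(r)`, with
`1 + 1/(p-1) = θ`.
-/

open Real Filter Asymptotics Set Topology

lemma le_rpow_neg_sub_rpow_neg_add {a u γ : ℝ} (ha : 0 < a) (hγ : 0 ≤ γ) (hu : 0 < u)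
    (hua : u ≤ a) : γ * (2 * a) ^ (-γ - 1) * u ≤ a ^ (-γ) - (a + u) ^ (-γ) := by
  obtain ⟨c, ⟨hac, hcu⟩, hslope⟩ := exists_hasDerivAt_eq_slope (fun y => y ^ (-γ))
    (fun y => -γ * y ^ (-γ - 1)) (lt_add_of_pos_right a hu)
    (fun y hy =>
      (continuousAt_rpow_const y (-γ) (Or.inl (ha.trans_le hy.1).ne')).continuousWithinAt)
    (fun y hy => hasDerivAt_rpow_const (Or.inl (ha.trans hy.1).ne'))
  have hdrop : a ^ (-γ) - (a + u) ^ (-γ) = γ * c ^ (-γ - 1) * u := by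
    rw [add_sub_cancel_left, eq_div_iff hu.ne'] at hslope
    linarith
  have hc : (2 * a) ^ (-γ - 1) ≤ c ^ (-γ - 1) :=
    rpow_le_rpow_of_nonpos (ha.trans hac) (by linarith) (by linarith)
  rw [hdrop]
  gcongr

lemma eventually_mul_rpow_le_sub_rpow_neg {A a B γ θ : ℝ} (hA : 0 ≤ A) (ha : 0 < a) (hB : 0 < B)
    (hγ : 0 ≤ γ) (hθ : 0 < θ) :
    ∀ᶠ ρ in 𝓝[>] 0, A * γ * (2 * a) ^ (-γ - 1) * B * ρ ^ θ
      ≤ A * a ^ (-γ) - A * (a + B * ρ ^ θ) ^ (-γ) := by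
  have hsmall : ∀ᶠ ρ in 𝓝[>] (0 : ℝ), B * ρ ^ θ < a := by
    have : Tendsto (fun ρ : ℝ => B * ρ ^ θ) (𝓝 0) (𝓝 0) := by
      simpa [zero_rpow hθ.ne'] using ((continuous_rpow_const hθ.le).tendsto 0).const_mul B
    exact (this.mono_left nhdsWithin_le_nhds).eventually (gt_mem_nhds ha)
  filter_upwards [hsmall, self_mem_nhdsWithin] with ρ hρa hρ
  have hu : 0 < B * ρ ^ θ := mul_pos hB (rpow_pos_of_pos hρ θ)
  calc A * γ * (2 * a) ^ (-γ - 1) * B * ρ ^ θ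
        = A * (γ * (2 * a) ^ (-γ - 1) * (B * ρ ^ θ)) := by ring
    _ ≤ A * (a ^ (-γ) - (a + B * ρ ^ θ) ^ (-γ)) :=
        mul_le_mul_of_nonneg_left (le_rpow_neg_sub_rpow_neg_add ha hγ hu hρa.le) hA
    _ = A * a ^ (-γ) - A * (a + B * ρ ^ θ) ^ (-γ) := mul_sub _ _ _

lemma isLittleO_rpow_inv_of_tendsto_rpow_mul_deriv {f : ℝ → ℝ} {p : ℝ} (hp : 1 < p)
    (hf : Differentiable ℝ f) (h0 : f 0 = 0) (hpos : ∀ r, 0 < r → 0 < f r)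
    (hlim : Tendsto (fun r => |f r| ^ (p - 2) * deriv f r) (𝓝[>] 0) (𝓝 0)) :
    f =o[𝓝[>] 0] fun r => r ^ (p - 1)⁻¹ := by
  set g : ℝ → ℝ := fun r => f r ^ (p - 1)
  have hderiv : ∀ r, 0 < r → HasDerivAt g (deriv f r * (p - 1) * f r ^ (p - 2)) r := by
    intro r hr
    have := (hf r).hasDerivAt.rpow_const (p := p - 1) (Or.inl (hpos r hr).ne')
    rwa [show p - 1 - 1 = p - 2 by ring] at this
  have hg : HasDerivWithinAt g 0 (Ici 0) 0 := by
    refine hasDerivWithinAt_Ici_of_tendsto_deriv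
      (fun r hr => (hderiv r hr).differentiableAt.differentiableWithinAt)
      ((hf.continuous.continuousAt.rpow_const (Or.inr (by linarith))).continuousWithinAt)
      self_mem_nhdsWithin ?_
    have := hlim.const_mul (p - 1)
    rw [mul_zero] at this
    refine this.congr' ?_
    filter_upwards [self_mem_nhdsWithin] with r hr
    rw [(hderiv r hr).deriv, abs_of_pos (hpos r hr)]
    ring
  have hgo : g =o[𝓝[>] 0] fun r => r := by
    have := hg.isLittleO.mono (nhdsWithin_mono _ Ioi_subset_Ici_self)
    simpa [g, h0, zero_rpow (by linarith : p - 1 ≠ 0)] using this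
  have hid : (0 : ℝ → ℝ) ≤ᶠ[𝓝[>] 0] fun r => r :=
    eventually_mem_nhdsWithin.mono fun r hr => le_of_lt hr
  refine (hgo.rpow (inv_pos.2 (by linarith)) hid).congr' ?_ EventuallyEq.rfl
  filter_upwards [self_mem_nhdsWithin] with r hr
  exact rpow_rpow_inv (hpos r hr).le (by linarith)

lemma abs_le_mul_deriv_of_monotoneOn {ξ : ℝ → ℝ} (hξ : Differentiable ℝ ξ) (h0 : ξ 0 = 0)
    (h1 : deriv ξ 0 = 0) (hmono : MonotoneOn (deriv ξ) (Ici 0)) {r : ℝ} (hr : 0 < r) :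
    |ξ r| ≤ r * deriv ξ r := by
  obtain ⟨d, ⟨hd0, hdr⟩, hslope⟩ := exists_hasDerivAt_eq_slope ξ (deriv ξ) hr
    hξ.continuous.continuousOn fun t _ => (hξ t).hasDerivAt
  rw [h0, sub_zero, sub_zero, eq_div_iff hr.ne'] at hslope
  have hd : 0 ≤ deriv ξ d := h1 ▸ hmono self_mem_Ici hd0.le hd0.le
  have hdr' : deriv ξ d ≤ deriv ξ r := hmono hd0.le hr.le hdr.le
  rw [← hslope, abs_of_nonneg (mul_nonneg hd hr.le), mul_comm]
  exact mul_le_mul_of_nonneg_left hdr' hr.le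

lemma isLittleO_rpow_add_one_of_deriv {ξ : ℝ → ℝ} {κ : ℝ} (hξ : Differentiable ℝ ξ) (h0 : ξ 0 = 0)
    (h1 : deriv ξ 0 = 0) (hmono : MonotoneOn (deriv ξ) (Ici 0))
    (hκ : deriv ξ =o[𝓝[>] 0] fun r => r ^ κ) :
    ξ =o[𝓝[>] 0] fun r => r ^ (κ + 1) := by
  have hbig : ξ =O[𝓝[>] 0] fun r => r * deriv ξ r := by
    refine IsBigO.of_bound' ?_
    filter_upwards [self_mem_nhdsWithin] with r (hr : 0 < r)
    exact (abs_le_mul_deriv_of_monotoneOn hξ h0 h1 hmono hr).trans (le_abs_self _)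
  refine (hbig.trans_isLittleO ((isBigO_refl (fun r : ℝ => r) _).mul_isLittleO hκ)).congr'
    EventuallyEq.rfl ?_
  filter_upwards [self_mem_nhdsWithin] with r (hr : 0 < r)
  rw [rpow_add_one hr.ne', mul_comm]

lemma isLittleO_rpow_of_admissible {ξ : ℝ → ℝ} {p : ℝ} (hp : 1 < p) (hreg : ContDiff ℝ 2 ξ)
    (h0 : ξ 0 = 0) (h1 : deriv ξ 0 = 0) (hpos : ∀ r : ℝ, 0 < r → 0 < deriv (deriv ξ) r)
    (hlim : Tendsto (fun r => |deriv ξ r| ^ (p - 2) * deriv (deriv ξ) r) (𝓝[>] 0) (𝓝 0)) :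
    ξ =o[𝓝[>] 0] fun r => r ^ (p / (p - 1)) := by
  have hξ' : Differentiable ℝ (deriv ξ) := (hreg.iterate_deriv' 1 1).differentiable one_ne_zero
  have hmono : StrictMonoOn (deriv ξ) (Ici 0) :=
    strictMonoOn_of_deriv_pos (convex_Ici 0) hξ'.continuous.continuousOn
      (fun r hr => hpos r (by rwa [interior_Ici] at hr))
  have hξ'pos : ∀ r, 0 < r → 0 < deriv ξ r := fun r hr => h1 ▸ hmono self_mem_Ici hr.le hr
  have := isLittleO_rpow_add_one_of_deriv (hreg.differentiable (by norm_num)) h0 h1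
    hmono.monotoneOn (isLittleO_rpow_inv_of_tendsto_rpow_mul_deriv hp hξ' h1 hξ'pos hlim)
  rwa [show (p - 1)⁻¹ + 1 = p / (p - 1) by field_simp [(by linarith : p - 1 ≠ 0)]; ring] at this

theorem no_admissible_touching_at_origin_general (N : ℕ) (hN : 1 ≤ N)
    (p q T a b t₀ δ : ℝ)
    (hp : p ∈ Set.Ioo (1:ℝ) 2) (hq : q ∈ Set.Ioo (0:ℝ) (p / 2))
    (ha : 0 < a) (hb : 0 < b) (ht₀ : t₀ ∈ Set.Ioo (0:ℝ) T) (hδ : 0 < δ)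
    (ξ : ℝ → ℝ) (hreg : ContDiff ℝ 2 ξ)
    (h0 : ξ 0 = 0) (h1 : deriv ξ 0 = 0)
    (hpos : ∀ r : ℝ, 0 < r → 0 < deriv (deriv ξ) r)
    (hlim : Tendsto (fun r => |deriv ξ r| ^ (p - 2) * deriv (deriv ξ) r)
      (nhdsWithin 0 (Set.Ioi 0)) (nhds 0))
    (W : ℝ → EuclideanSpace ℝ (Fin N) → ℝ)
    (hW : ∀ t x, W t x = (T - t) ^ ((p - q) / (p - 2*q))
        * (a + b * ‖x‖ ^ (p / (p - 1))
            * (T - t) ^ ((p / (p - 1)) * ((q - p + 1) / (p - 2*q))))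
          ^ (-((p - 1) * q / (p * (1 - q)))))
    (htouch : ∀ x : EuclideanSpace ℝ (Fin N), ‖x‖ < δ → W t₀ 0 - W t₀ x ≤ ξ ‖x‖) :
    False := by
  obtain ⟨hp1, hp2⟩ := hp
  obtain ⟨hq0, hq2⟩ := hq
  set θ := p / (p - 1)
  set γ := (p - 1) * q / (p * (1 - q))
  have hθ : 0 < θ := div_pos (by linarith) (by linarith)
  have hγ : 0 < γ := div_pos (mul_pos (by linarith) hq0) (mul_pos (by linarith) (by linarith))
  have hTt : 0 < T - t₀ := sub_pos.2 ht₀.2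
  set A := (T - t₀) ^ ((p - q) / (p - 2*q))
  set B := b * (T - t₀) ^ (θ * ((q - p + 1) / (p - 2*q)))
  have hA : 0 < A := rpow_pos_of_pos hTt _
  have hB : 0 < B := mul_pos hb (rpow_pos_of_pos hTt _)
  have hW' : ∀ x, W t₀ x = A * (a + B * ‖x‖ ^ θ) ^ (-γ) := fun x => by rw [hW, mul_right_comm b]
  have hc : 0 < A * γ * (2 * a) ^ (-γ - 1) * B := by positivity
  obtain ⟨ρ, ⟨hdrop, hξρ⟩, hρ, hρδ⟩ :=
    (((eventually_mul_rpow_le_sub_rpow_neg hA.le ha hB hγ.le hθ).and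
      ((isLittleO_rpow_of_admissible hp1 hreg h0 h1 hpos hlim).def (half_pos hc))).and
      (Ioo_mem_nhdsGT hδ)).exists
  set x : EuclideanSpace ℝ (Fin N) := EuclideanSpace.single ⟨0, hN⟩ ρ
  have hx : ‖x‖ = ρ := by simp [x, abs_of_pos hρ]
  have htouchx := htouch x (hx ▸ hρδ)
  rw [hW', hW', hx, norm_zero, zero_rpow hθ.ne', mul_zero, add_zero] at htouchx
  rw [Real.norm_eq_abs, norm_of_nonneg (rpow_pos_of_pos hρ θ).le] at hξρ
  linarith [le_abs_self (ξ ρ), mul_pos hc (rpow_pos_of_pos hρ θ)]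

theorem no_admissible_touching_at_origin (N : ℕ) (hN : 1 ≤ N)
    (p q T a b t₀ δ : ℝ)
    (hp : p ∈ Set.Ioo (1:ℝ) 2) (hq : q ∈ Set.Ioo (0:ℝ) (p / 2))
    (hT : 0 < T) (ha : 0 < a) (hb : 0 < b) (ht₀ : t₀ ∈ Set.Ioo (0:ℝ) T) (hδ : 0 < δ)
    (ξ : ℝ → ℝ) (hreg : ContDiff ℝ 2 ξ)
    (h0 : ξ 0 = 0) (h1 : deriv ξ 0 = 0) (h2 : deriv (deriv ξ) 0 = 0)
    (hpos : ∀ r : ℝ, 0 < r → 0 < deriv (deriv ξ) r)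
    (hlim : Tendsto (fun r => |deriv ξ r| ^ (p - 2) * deriv (deriv ξ) r)
      (nhdsWithin 0 (Set.Ioi 0)) (nhds 0))
    (W : ℝ → EuclideanSpace ℝ (Fin N) → ℝ)
    (hW : ∀ t x, W t x = (T - t) ^ ((p - q) / (p - 2*q))
        * (a + b * ‖x‖ ^ (p / (p - 1))
            * (T - t) ^ ((p / (p - 1)) * ((q - p + 1) / (p - 2*q))))
          ^ (-((p - 1) * q / (p * (1 - q)))))
    (htouch : ∀ x : EuclideanSpace ℝ (Fin N), ‖x‖ < δ → W t₀ 0 - W t₀ x ≤ ξ ‖x‖) :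
    False :=
  no_admissible_touching_at_origin_general N hN p q T a b t₀ δ hp hq ha hb ht₀ hδ ξ hreg h0 h1 hpos
    hlim W hW htouch
end

section
/- Let 0<q<1, b>0, γ>0, θ>1 and suppose b^{(1−q)γ} ≥ 2/((1−q)(γθ)^q). Define H₂(y) := (γbθ)^q y^{q(θ−1)} (a+by^θ)^{(1−q)(γ+1)} − (1/(1−q)) b y^θ for y≥0, where a>0 and the exponents satisfy q(θ−1)+θ(1−q)(γ+1)=θ. Then H₂(y) ≥ ((γθ)^q/2) b^{1+(1−q)γ} y^θ ≥ 0 for all y≥0. -/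
open Real

theorem H2_lower_bound (q b γ θ a : ℝ) (hq : q ∈ Set.Ioo (0:ℝ) 1)
    (hb : 0 < b) (hγ : 0 < γ) (hθ : 1 < θ) (ha : 0 < a)
    (hexp : q * (θ - 1) + θ * (1 - q) * (γ + 1) = θ)
    (hbig : 2 / ((1 - q) * (γ * θ) ^ q) ≤ b ^ ((1 - q) * γ)) :
    ∀ y : ℝ, 0 ≤ y →
      ((γ * θ) ^ q / 2) * b ^ (1 + (1 - q) * γ) * y ^ θ
          ≤ (γ * b * θ) ^ q * y ^ (q * (θ - 1)) * (a + b * y ^ θ) ^ ((1 - q) * (γ + 1))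
              - (1 / (1 - q)) * (b * y ^ θ)
        ∧ 0 ≤ ((γ * θ) ^ q / 2) * b ^ (1 + (1 - q) * γ) * y ^ θ := by
  intro y hy
  obtain ⟨hq0, hq1⟩ := hq
  have h1q : 0 < 1 - q := by linarith
  have hγθ : 0 < γ * θ := by positivity
  have hA : 0 < (γ * θ) ^ q := rpow_pos_of_pos hγθ q
  constructor
  · rcases hy.eq_or_lt with heq | hpos
    · subst heq
      rw [zero_rpow (by positivity : θ ≠ 0),
        zero_rpow (by nlinarith : (0:ℝ) < q * (θ - 1)).ne']
      simp
    · have hyθ : 0 < y ^ θ := rpow_pos_of_pos hpos θ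
      have hE : 0 ≤ (1 - q) * (γ + 1) := by positivity
      -- scalar inequality
      have hbX : b ^ (1 + (1 - q) * γ) = b * b ^ ((1 - q) * γ) := by
        rw [rpow_add hb, rpow_one]
      have hbig' : 2 ≤ b ^ ((1 - q) * γ) * ((1 - q) * (γ * θ) ^ q) := by
        rw [div_le_iff₀ (by positivity)] at hbig; exact hbig
      have hsc : (1 / (1 - q)) * b ≤ ((γ * θ) ^ q / 2) * b ^ (1 + (1 - q) * γ) := by
        rw [hbX, one_div_mul_eq_div, div_le_iff₀ h1q]
        nlinarith [mul_le_mul_of_nonneg_left hbig' hb.le]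
      -- key algebraic identity
      have key : (γ * b * θ) ^ q * y ^ (q * (θ - 1)) * (b * y ^ θ) ^ ((1 - q) * (γ + 1))
          = (γ * θ) ^ q * b ^ (1 + (1 - q) * γ) * y ^ θ := by
        rw [show γ * b * θ = (γ * θ) * b by ring, mul_rpow hγθ.le hb.le,
          mul_rpow hb.le hyθ.le, ← rpow_mul hpos.le]
        rw [show (γ * θ) ^ q * b ^ q * y ^ (q * (θ - 1)) *
              (b ^ ((1 - q) * (γ + 1)) * y ^ (θ * ((1 - q) * (γ + 1))))
            = (γ * θ) ^ q * (b ^ q * b ^ ((1 - q) * (γ + 1))) *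
              (y ^ (q * (θ - 1)) * y ^ (θ * ((1 - q) * (γ + 1)))) by ring,
          ← rpow_add hb, ← rpow_add hpos,
          show q + (1 - q) * (γ + 1) = 1 + (1 - q) * γ by ring,
          show q * (θ - 1) + θ * ((1 - q) * (γ + 1)) = θ by linear_combination hexp]
      have h1 : (b * y ^ θ) ^ ((1 - q) * (γ + 1))
          ≤ (a + b * y ^ θ) ^ ((1 - q) * (γ + 1)) :=
        rpow_le_rpow (by positivity) (by linarith) hE
      have h2 : (γ * b * θ) ^ q * y ^ (q * (θ - 1)) * (b * y ^ θ) ^ ((1 - q) * (γ + 1))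
          ≤ (γ * b * θ) ^ q * y ^ (q * (θ - 1)) * (a + b * y ^ θ) ^ ((1 - q) * (γ + 1)) := by
        apply mul_le_mul_of_nonneg_left h1
        positivity
      rw [key] at h2
      have h3 := mul_le_mul_of_nonneg_right hsc hyθ.le
      nlinarith [h2, h3]
  · positivity
end

section
/- Let N≥1, p∈(1,2), α>0, γ>0, θ>1, and a,b,y₀>0 satisfy Na/(2p(γ+1)) ≥ b y₀^θ and (N(γθ)^{p−1}/(2α)) b^{p−1} ≥ a^{1−(2−p)(γ+1)}. Then for all y∈(0,y₀], the quantity H₁(y) := −αa + (γbθ)^{p−1}[N − p(γ+1) b y^θ/(a+b y^θ)] (a+b y^θ)^{(2−p)(γ+1)} is nonnegative. -/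
open Real

theorem H1_nonnegative_near_origin (N : ℕ) (hN : 1 ≤ N) (p α γ θ a b y₀ : ℝ)
    (hp : p ∈ Set.Ioo (1:ℝ) 2) (hα : 0 < α) (hγ : 0 < γ) (hθ : 1 < θ)
    (ha : 0 < a) (hb : 0 < b) (hy₀ : 0 < y₀)
    (hc1 : b * y₀ ^ θ ≤ (N:ℝ) * a / (2 * p * (γ + 1)))
    (hc2 : a ^ (1 - (2 - p) * (γ + 1)) ≤ ((N:ℝ) * (γ * θ) ^ (p - 1) / (2 * α)) * b ^ (p - 1)) :
    ∀ y ∈ Set.Ioc (0:ℝ) y₀,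
      0 ≤ -α * a + (γ * b * θ) ^ (p - 1)
            * ((N:ℝ) - p * (γ + 1) * (b * y ^ θ) / (a + b * y ^ θ))
            * (a + b * y ^ θ) ^ ((2 - p) * (γ + 1)) := by
  rintro y ⟨hy0, hyy₀⟩
  obtain ⟨hp1, hp2⟩ := hp
  have hNpos : (0:ℝ) < N := by exact_mod_cast Nat.lt_of_lt_of_le Nat.zero_lt_one hN
  set s := b * y ^ θ with hs_def
  have hyθ : (0:ℝ) < y ^ θ := rpow_pos_of_pos hy0 θ
  have hs : 0 < s := mul_pos hb hyθ
  have hsle : s ≤ (N:ℝ) * a / (2 * p * (γ + 1)) := by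
    refine le_trans ?_ hc1
    exact mul_le_mul_of_nonneg_left (rpow_le_rpow hy0.le hyy₀ (by linarith)) hb.le
  have hγ1 : (0:ℝ) < γ + 1 := by linarith
  have hpγ : (0:ℝ) < 2 * p * (γ + 1) := by positivity
  -- bracket bound
  have hbr : (N:ℝ) / 2 ≤ (N:ℝ) - p * (γ + 1) * s / (a + s) := by
    have h1 : s / (a + s) ≤ s / a :=
      div_le_div_of_nonneg_left hs.le ha (by linarith)
    have h2 : p * (γ + 1) * s / (a + s) ≤ p * (γ + 1) * (s / a) := by
      rw [mul_div_assoc]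
      exact mul_le_mul_of_nonneg_left h1 (by positivity)
    have h3 : p * (γ + 1) * (s / a) ≤ (N:ℝ) / 2 := by
      rw [le_div_iff₀ hpγ] at hsle
      rw [← mul_div_assoc, div_le_div_iff₀ ha two_pos]
      nlinarith
    linarith
  set E := (2 - p) * (γ + 1) with hE_def
  have hEpos : 0 < E := by
    have : 0 < 2 - p := by linarith
    positivity
  have hpow : a ^ E ≤ (a + s) ^ E :=
    rpow_le_rpow ha.le (by linarith) hEpos.le
  have hC : (0:ℝ) < (γ * b * θ) ^ (p - 1) := rpow_pos_of_pos (by positivity) _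
  have haE : (0:ℝ) < a ^ E := rpow_pos_of_pos ha E
  have hmain : (γ * b * θ) ^ (p - 1) * ((N:ℝ) / 2) * a ^ E ≤
      (γ * b * θ) ^ (p - 1) * ((N:ℝ) - p * (γ + 1) * s / (a + s)) * (a + s) ^ E :=
    mul_le_mul (mul_le_mul_of_nonneg_left hbr hC.le) hpow haE.le
      (mul_nonneg hC.le (le_trans (by positivity) hbr))
  -- α * a ≤ (γbθ)^(p-1) * (N/2) * a^E
  have hsplit : (γ * b * θ) ^ (p - 1) = (γ * θ) ^ (p - 1) * b ^ (p - 1) := by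
    rw [show γ * b * θ = (γ * θ) * b by ring, mul_rpow (by positivity) hb.le]
  have hkey : α * a ≤ (γ * b * θ) ^ (p - 1) * ((N:ℝ) / 2) * a ^ E := by
    have h := mul_le_mul_of_nonneg_right hc2 haE.le
    rw [← rpow_add ha] at h
    have hone : (1 - E) + E = 1 := by ring
    rw [hone, rpow_one] at h
    rw [hsplit]
    calc α * a ≤ α * ((N:ℝ) * (γ * θ) ^ (p - 1) / (2 * α) * b ^ (p - 1) * a ^ E) := by
          exact mul_le_mul_of_nonneg_left h hα.le
      _ = (γ * θ) ^ (p - 1) * b ^ (p - 1) * ((N:ℝ) / 2) * a ^ E := by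
          field_simp
  linarith
end
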